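/- arXiv:2604.10266 — 2 statements merged into one kernel-verified Lean document; each statement's English description precedes it below -/
import Mathlib

section
/- Assume in addition that g is locally Hölder continuous of some order β ∈ (0, H). Then for every t > 0, the Lebesgue integral ∫₀^t s^{2H−1} / X_s ds is finite and strictly positive; moreover a ∫₀^t s^{2H−1}/X_s ds ≤ X_t − X₀ + b∫₀^t X_s ds − σ g(t). -/
/-!
The comparison principle makes `X^ε` increase as `ε ↓ 0`, so `X^ε ≤ X`, and an a priori bound
on `X^ε`, uniform in `ε ≤ 1`, makes `∫₀ᵗ X^ε → ∫₀ᵗ X` by dominated convergence. Read at time `t`,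
the approximating equation then shows that `∫₀ᵗ (s+ε)^{2H-1}/(X^ε_s⁺ + ε) ds` converges to
`(X_t − X₀ + b ∫₀ᵗ X − σ g(t)) / a`, and Fatou's lemma bounds `∫₀ᵗ s^{2H-1}/X_s ds` by this limit.
Where `X_s ≤ 0` the approximating integrands blow up like `1/ε`, so the finiteness of the Fatou
bound forces `X > 0` almost everywhere, which gives integrability and strict positivity.
-/

open MeasureTheory Filter Set

/-- `X` is a continuous solution on `[0,T]` of the ε-approximating equation
`X_t = X₀ + a ∫₀ᵗ (s+ε)^{2H-1} / (X_s 1_{X_s>0} + ε) ds − b ∫₀ᵗ X_s ds + σ g(t)`. -/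
def approxSol (X₀ a b σ H : ℝ) (g : ℝ → ℝ) (T ε : ℝ) (X : ℝ → ℝ) : Prop :=
  ContinuousOn X (Set.Icc 0 T) ∧
    ∀ t ∈ Set.Icc (0:ℝ) T,
      X t = X₀ + a * (∫ s in (0:ℝ)..t,
            (s + ε) ^ (2 * H - 1) / ((if 0 < X s then X s else 0) + ε))
          - b * (∫ s in (0:ℝ)..t, X s) + σ * g t

open scoped Topology ENNReal

theorem ContinuousOn.exists_last_le {f : ℝ → ℝ} {a b c : ℝ} (hab : a ≤ b)
    (hf : ContinuousOn f (Icc a b)) (ha : f a ≤ c) :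
    ∃ r ∈ Icc a b, f r ≤ c ∧ ∀ u ∈ Ioc r b, c < f u := by
  have hS : IsCompact (Icc a b ∩ f ⁻¹' Iic c) :=
    isCompact_Icc.of_isClosed_subset
      (hf.preimage_isClosed_of_isClosed isClosed_Icc isClosed_Iic) inter_subset_left
  obtain ⟨r, ⟨hr, hfr⟩, hmax⟩ := hS.exists_isGreatest ⟨a, ⟨le_rfl, hab⟩, ha⟩
  refine ⟨r, hr, hfr, fun u hu => lt_of_not_ge fun hfu => ?_⟩
  exact hu.1.not_ge (hmax ⟨⟨hr.1.trans hu.1.le, hu.2⟩, hfu⟩)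

theorem integral_rpow_sub_one_le {p r s : ℝ} (hp : 0 < p) (hr : 0 ≤ r) :
    ∫ u in r..s, u ^ (p - 1) ≤ s ^ p / p := by
  rw [integral_rpow (Or.inl (by linarith)), sub_add_cancel]
  gcongr
  linarith [Real.rpow_nonneg hr p]

theorem MeasureTheory.integral_pos_of_ae_pos {α : Type*} [MeasurableSpace α] {μ : Measure α}
    (hμ : μ ≠ 0) {f : α → ℝ} (hf : Integrable f μ) (hpos : ∀ᵐ x ∂μ, 0 < f x) :
    0 < ∫ x, f x ∂μ := by
  rw [integral_pos_iff_support_of_nonneg_ae (hpos.mono fun _ h => h.le) hf, pos_iff_ne_zero,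
    Ne, Measure.measure_support_eq_zero_iff μ]
  intro hzero
  have hfalse : ∀ᵐ x ∂μ, False := (hpos.and hzero).mono fun _ h => h.1.ne' h.2
  exact hμ (ae_eq_bot.1 (eventually_false_iff_eq_bot.1 hfalse))

/-- Fatou's lemma for nonnegative real integrands, with a pointwise limit that may be infinite. -/
theorem MeasureTheory.integrable_toReal_of_tendsto_integral {α : Type*} [MeasurableSpace α]
    {μ : Measure α} {F : ℕ → α → ℝ} {f : α → ℝ≥0∞} {L : ℝ}
    (hF : ∀ n, Integrable (F n) μ) (hF_nonneg : ∀ n, 0 ≤ᵐ[μ] F n)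
    (hFf : ∀ᵐ x ∂μ, Tendsto (fun n => ENNReal.ofReal (F n x)) atTop (𝓝 (f x)))
    (hL : Tendsto (fun n => ∫ x, F n x ∂μ) atTop (𝓝 L)) :
    (∀ᵐ x ∂μ, f x < ∞) ∧ Integrable (fun x => (f x).toReal) μ ∧
      ∫ x, (f x).toReal ∂μ ≤ L := by
  have hmeas : ∀ n, AEMeasurable (fun x => ENNReal.ofReal (F n x)) μ :=
    fun n => (hF n).aemeasurable.ennreal_ofReal
  have hf : AEMeasurable f μ := aemeasurable_of_tendsto_metrizable_ae' hmeas hFf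
  have hL_nonneg : 0 ≤ L :=
    ge_of_tendsto' hL fun n => integral_nonneg_of_ae (hF_nonneg n)
  have hfatou : ∫⁻ x, f x ∂μ ≤ ENNReal.ofReal L :=
    calc ∫⁻ x, f x ∂μ = ∫⁻ x, liminf (fun n => ENNReal.ofReal (F n x)) atTop ∂μ :=
          lintegral_congr_ae (hFf.mono fun _ hx => hx.liminf_eq.symm)
      _ ≤ liminf (fun n => ∫⁻ x, ENNReal.ofReal (F n x) ∂μ) atTop := lintegral_liminf_le' hmeas
      _ = ENNReal.ofReal L := by
          simp_rw [← ofReal_integral_eq_lintegral_ofReal (hF _) (hF_nonneg _)]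
          exact (ENNReal.tendsto_ofReal hL).liminf_eq
  have hfin : ∫⁻ x, f x ∂μ ≠ ∞ := (hfatou.trans_lt ENNReal.ofReal_lt_top).ne
  have hlt : ∀ᵐ x ∂μ, f x < ∞ := ae_lt_top' hf hfin
  refine ⟨hlt, integrable_toReal_of_lintegral_ne_top hf hfin, ?_⟩
  rw [integral_toReal hf hlt]
  exact ENNReal.toReal_le_of_le_ofReal hL_nonneg hfatou

noncomputable def approxIntegrand (H ε s y : ℝ) : ℝ :=
  (s + ε) ^ (2 * H - 1) / (max y 0 + ε)

section approxIntegrand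

variable {H ε s y : ℝ}

theorem approxIntegrand_nonneg (hε : 0 < ε) (hs : 0 ≤ s) : 0 ≤ approxIntegrand H ε s y :=
  div_nonneg (Real.rpow_nonneg (by linarith) _) (by positivity)

theorem approxIntegrand_le_of_le {c : ℝ} (hε : 0 < ε) (hs : 0 ≤ s) (hc : 0 < c) (hcy : c ≤ y) :
    approxIntegrand H ε s y ≤ (s + ε) ^ (2 * H - 1) / c :=
  div_le_div_of_nonneg_left (Real.rpow_nonneg (by linarith) _) hc
    (by linarith [le_max_left y 0])

theorem approxIntegrand_anti {ε' y' : ℝ} (hH : H ≤ 1 / 2) (hε : 0 < ε) (hs : 0 ≤ s)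
    (hεε' : ε ≤ ε') (hyy' : y ≤ y') : approxIntegrand H ε' s y' ≤ approxIntegrand H ε s y := by
  refine div_le_div₀ (Real.rpow_nonneg (by linarith) _)
    (Real.rpow_le_rpow_of_nonpos (by linarith) (by linarith) (by linarith)) (by positivity) ?_
  gcongr

theorem continuousOn_approxIntegrand {Y : ℝ → ℝ} {T : ℝ} (hε : 0 < ε)
    (hY : ContinuousOn Y (Icc 0 T)) :
    ContinuousOn (fun s => approxIntegrand H ε s (Y s)) (Icc 0 T) := by
  refine ContinuousOn.div ?_ (by fun_prop) fun s _ => by positivity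
  exact (continuous_add_const ε).continuousOn.rpow_const
    fun s hs => Or.inl (add_pos_of_nonneg_of_pos hs.1 hε).ne'

theorem tendsto_approxIntegrand {εs ys : ℕ → ℝ} {x : ℝ} (hs : 0 < s)
    (hεs : Tendsto εs atTop (𝓝[>] 0)) (hys : Tendsto ys atTop (𝓝 x)) (hyx : ∀ n, ys n ≤ x) :
    Tendsto (fun n => ENNReal.ofReal (approxIntegrand H (εs n) s (ys n))) atTop
      (𝓝 (if 0 < x then ENNReal.ofReal (s ^ (2 * H - 1) / x) else ∞)) := by
  have hε0 : Tendsto εs atTop (𝓝 0) := tendsto_nhds_of_tendsto_nhdsWithin hεs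
  have hsε : Tendsto (fun n => s + εs n) atTop (𝓝 s) := by
    simpa using (tendsto_const_nhds (x := s)).add hε0
  have hnum : Tendsto (fun n => (s + εs n) ^ (2 * H - 1)) atTop (𝓝 (s ^ (2 * H - 1))) :=
    (Real.continuousAt_rpow_const s _ (Or.inl hs.ne')).tendsto.comp hsε
  split_ifs with hx
  · refine ENNReal.tendsto_ofReal (hnum.div ?_ hx.ne')
    simpa [max_eq_left hx.le] using
      (hys.max (tendsto_const_nhds (x := (0:ℝ)))).add hε0
  · have hy0 : ∀ n, max (ys n) 0 = 0 := fun n => max_eq_right ((hyx n).trans (not_lt.1 hx))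
    refine ENNReal.tendsto_ofReal_atTop.comp ?_
    simp only [approxIntegrand, hy0, zero_add, div_eq_mul_inv]
    exact hnum.pos_mul_atTop (Real.rpow_pos_of_pos hs _) (tendsto_inv_nhdsGT_zero.comp hεs)

end approxIntegrand

namespace approxSol

variable {X₀ a b σ H T ε : ℝ} {g Y : ℝ → ℝ}

theorem eq_integral_approxIntegrand (h : approxSol X₀ a b σ H g T ε Y) {t : ℝ}
    (ht : t ∈ Icc 0 T) :
    Y t = X₀ + a * (∫ s in (0:ℝ)..t, approxIntegrand H ε s (Y s))
      - b * (∫ s in (0:ℝ)..t, Y s) + σ * g t := by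
  have hmax : ∀ y : ℝ, (if 0 < y then y else 0) = max y 0 := fun y => by
    rw [max_comm, max_def_lt]
  simpa only [approxIntegrand, hmax] using h.2 t ht

theorem apply_zero (h : approxSol X₀ a b σ H g T ε Y) (hT : 0 ≤ T) (hg0 : g 0 = 0) :
    Y 0 = X₀ := by
  simpa [hg0] using h.eq_integral_approxIntegrand ⟨le_rfl, hT⟩

theorem sub_eq (h : approxSol X₀ a b σ H g T ε Y) (hε : 0 < ε) {r s : ℝ}
    (hr : r ∈ Icc 0 T) (hs : s ∈ Icc 0 T) :
    Y s - Y r = a * (∫ u in r..s, approxIntegrand H ε u (Y u))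
      - b * (∫ u in r..s, Y u) + σ * (g s - g r) := by
  have hint : ∀ {f : ℝ → ℝ}, ContinuousOn f (Icc 0 T) →
      ∀ x ∈ Icc (0:ℝ) T, IntervalIntegrable f volume 0 x := fun hf x hx =>
    (hf.mono (uIcc_subset_Icc ⟨le_rfl, hx.1.trans hx.2⟩ hx)).intervalIntegrable
  have hφ := continuousOn_approxIntegrand (H := H) hε h.1
  rw [← intervalIntegral.integral_interval_sub_left (hint hφ s hs) (hint hφ r hr),
    ← intervalIntegral.integral_interval_sub_left (hint h.1 s hs) (hint h.1 r hr)]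
  linear_combination h.eq_integral_approxIntegrand hs - h.eq_integral_approxIntegrand hr

theorem le_of_eps_le {ε' : ℝ} {Y' : ℝ → ℝ} (h : approxSol X₀ a b σ H g T ε Y)
    (h' : approxSol X₀ a b σ H g T ε' Y') (ha : 0 ≤ a) (hb : 0 ≤ b) (hH : H ≤ 1 / 2)
    (hg0 : g 0 = 0) (hε : 0 < ε) (hεε' : ε ≤ ε') {s : ℝ} (hs : s ∈ Icc 0 T) :
    Y' s ≤ Y s := by
  by_contra! hlt
  have hε' : 0 < ε' := hε.trans_le hεε'
  have hT : 0 ≤ T := hs.1.trans hs.2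
  -- after the last time `r ≤ s` with `Y' r ≤ Y r`, the drift of `Y'` is the smaller one
  obtain ⟨r, hr, hYr, hY⟩ := ((h'.1.sub h.1).mono (Icc_subset_Icc le_rfl hs.2)).exists_last_le
    hs.1 (c := 0) (by simp [h.apply_zero hT hg0, h'.apply_zero hT hg0])
  simp only [Pi.sub_apply, sub_nonpos, sub_pos] at hYr hY
  have hrT : r ∈ Icc 0 T := ⟨hr.1, hr.2.trans hs.2⟩
  have hsub : uIcc r s ⊆ Icc 0 T := uIcc_subset_Icc hrT hs
  have hYY' : ∀ u ∈ Ioo r s, Y u ≤ Y' u := fun u hu => (hY u (Ioo_subset_Ioc_self hu)).le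
  have hφ : ∫ u in r..s, approxIntegrand H ε' u (Y' u)
      ≤ ∫ u in r..s, approxIntegrand H ε u (Y u) :=
    intervalIntegral.integral_mono_on_of_le_Ioo hr.2
      ((continuousOn_approxIntegrand hε' h'.1).mono hsub).intervalIntegrable
      ((continuousOn_approxIntegrand hε h.1).mono hsub).intervalIntegrable
      fun u hu => approxIntegrand_anti hH hε (hr.1.trans hu.1.le) hεε' (hYY' u hu)
  have hYint : ∫ u in r..s, Y u ≤ ∫ u in r..s, Y' u :=
    intervalIntegral.integral_mono_on_of_le_Ioo hr.2 (h.1.mono hsub).intervalIntegrable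
      (h'.1.mono hsub).intervalIntegrable hYY'
  linarith [h.sub_eq hε hrT hs, h'.sub_eq hε' hrT hs, mul_le_mul_of_nonneg_left hφ ha,
    mul_le_mul_of_nonneg_left hYint hb]

theorem apply_le (h : approxSol X₀ a b σ H g T ε Y) (hX₀ : 0 < X₀) (ha : 0 ≤ a) (hb : 0 ≤ b)
    (hH : 0 < H) (hg0 : g 0 = 0) (hε : 0 < ε) (hε1 : ε ≤ 1) {G : ℝ}
    (hG : ∀ x ∈ Icc 0 T, |g x| ≤ G) {s : ℝ} (hs : s ∈ Icc 0 T) :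
    Y s ≤ X₀ + a * ((T + 1) ^ (2 * H) / (2 * H) / X₀) + 2 * |σ| * G := by
  have hT : 0 ≤ T := hs.1.trans hs.2
  rcases le_or_gt (Y s) X₀ with hle | hlt
  · have hG0 : 0 ≤ G := (abs_nonneg _).trans (hG 0 ⟨le_rfl, hT⟩)
    have : 0 ≤ a * ((T + 1) ^ (2 * H) / (2 * H) / X₀) + 2 * |σ| * G := by positivity
    linarith
  -- on the last excursion above `X₀` the integrand is at most `(u + ε)^{2H-1} / X₀`
  obtain ⟨r, hr, hYr, hY⟩ := (h.1.mono (Icc_subset_Icc le_rfl hs.2)).exists_last_le hs.1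
    (h.apply_zero hT hg0).le
  have hrT : r ∈ Icc 0 T := ⟨hr.1, hr.2.trans hs.2⟩
  have hsub : uIcc r s ⊆ Icc 0 T := uIcc_subset_Icc hrT hs
  have hφ : ∫ u in r..s, approxIntegrand H ε u (Y u) ≤ (T + 1) ^ (2 * H) / (2 * H) / X₀ :=
    calc ∫ u in r..s, approxIntegrand H ε u (Y u)
        ≤ ∫ u in r..s, (u + ε) ^ (2 * H - 1) / X₀ :=
          intervalIntegral.integral_mono_on_of_le_Ioo hr.2
            ((continuousOn_approxIntegrand hε h.1).mono hsub).intervalIntegrable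
            (((continuous_add_const ε).continuousOn.rpow_const fun u hu =>
              Or.inl (add_pos_of_nonneg_of_pos hu.1 hε).ne').div_const X₀ |>.mono
                hsub).intervalIntegrable
            fun u hu => approxIntegrand_le_of_le hε (hr.1.trans hu.1.le) hX₀
              (hY u (Ioo_subset_Ioc_self hu)).le
      _ = (∫ u in r + ε..s + ε, u ^ (2 * H - 1)) / X₀ := by
          rw [intervalIntegral.integral_div,
            intervalIntegral.integral_comp_add_right (fun u => u ^ (2 * H - 1))]
      _ ≤ (s + ε) ^ (2 * H) / (2 * H) / X₀ := by
          gcongr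
          exact integral_rpow_sub_one_le (by linarith) (by linarith [hr.1])
      _ ≤ (T + 1) ^ (2 * H) / (2 * H) / X₀ := by
          gcongr
          · linarith [hs.1]
          · linarith [hs.2]
  have hYint : 0 ≤ ∫ u in r..s, Y u := by
    simpa using intervalIntegral.integral_mono_on_of_le_Ioo hr.2 intervalIntegrable_const
      (h.1.mono hsub).intervalIntegrable
      fun u hu => (hX₀.trans (hY u (Ioo_subset_Ioc_self hu))).le
  have hg : σ * (g s - g r) ≤ 2 * |σ| * G :=
    calc σ * (g s - g r) ≤ |σ| * |g s - g r| := by rw [← abs_mul]; exact le_abs_self _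
      _ ≤ |σ| * (2 * G) := by
          gcongr
          linarith [abs_sub (g s) (g r), hG s hs, hG r hrT]
      _ = 2 * |σ| * G := by ring
  linarith [h.sub_eq hε hrT hs, mul_le_mul_of_nonneg_left hφ ha, mul_nonneg hb hYint]

end approxSol

section limit

variable {X₀ a b σ H : ℝ} {g : ℝ → ℝ} {Xe : ℝ → ℝ → ℝ} {X : ℝ → ℝ}

theorem approxSol_le_limit
    (hXe : ∀ ε > (0:ℝ), ∀ T > (0:ℝ), approxSol X₀ a b σ H g T ε (Xe ε))
    (hX : ∀ t ≥ (0:ℝ), Tendsto (fun ε => Xe ε t) (𝓝[>] 0) (𝓝 (X t)))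
    (ha : 0 ≤ a) (hb : 0 ≤ b) (hH : H ≤ 1 / 2) (hg0 : g 0 = 0) {ε s : ℝ} (hε : 0 < ε)
    (hs : 0 ≤ s) : Xe ε s ≤ X s := by
  refine ge_of_tendsto (hX s hs) ?_
  filter_upwards [Ioo_mem_nhdsGT hε] with ε' hε'
  exact (hXe ε' hε'.1 (s + 1) (by linarith)).le_of_eps_le (hXe ε hε (s + 1) (by linarith))
    ha hb hH hg0 hε'.1 hε'.2.le ⟨hs, by linarith⟩

theorem exists_abs_approxSol_le
    (hXe : ∀ ε > (0:ℝ), ∀ T > (0:ℝ), approxSol X₀ a b σ H g T ε (Xe ε))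
    (hgc : ContinuousOn g (Ici 0)) (hX₀ : 0 < X₀) (ha : 0 ≤ a) (hb : 0 ≤ b) (hH0 : 0 < H)
    (hH : H ≤ 1 / 2) (hg0 : g 0 = 0) {t : ℝ} (ht : 0 < t) :
    ∃ B, ∀ ε ∈ Ioc (0:ℝ) 1, ∀ s ∈ Icc 0 t, |Xe ε s| ≤ B := by
  obtain ⟨G, hG⟩ := isCompact_Icc.exists_bound_of_continuousOn
    (hgc.mono (Icc_subset_Ici_self : Icc 0 t ⊆ Ici 0))
  obtain ⟨C, hC⟩ := isCompact_Icc.exists_bound_of_continuousOn (hXe 1 one_pos t ht).1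
  refine ⟨max (X₀ + a * ((t + 1) ^ (2 * H) / (2 * H) / X₀) + 2 * |σ| * G) C,
    fun ε hε s hs => abs_le.2 ⟨?_, ?_⟩⟩
  · have h1 := (hXe ε hε.1 t ht).le_of_eps_le (hXe 1 one_pos t ht) ha hb hH hg0 hε.1 hε.2 hs
    linarith [neg_le_of_abs_le (hC s hs), le_max_right
      (X₀ + a * ((t + 1) ^ (2 * H) / (2 * H) / X₀) + 2 * |σ| * G) C]
  · exact ((hXe ε hε.1 t ht).apply_le hX₀ ha hb hH0 hg0 hε.1 hε.2
      (fun x hx => Real.norm_eq_abs (g x) ▸ hG x hx) hs).trans (le_max_left _ _)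

theorem tendsto_setIntegral_approxIntegrand
    (hXe : ∀ ε > (0:ℝ), ∀ T > (0:ℝ), approxSol X₀ a b σ H g T ε (Xe ε))
    (hX : ∀ t ≥ (0:ℝ), Tendsto (fun ε => Xe ε t) (𝓝[>] 0) (𝓝 (X t)))
    (ha : a ≠ 0) {t B : ℝ} (ht : 0 < t) {w : ℕ → ℝ} (hw : ∀ n, 0 < w n)
    (hwlim : Tendsto w atTop (𝓝[>] 0)) (hB : ∀ n, ∀ s ∈ Icc 0 t, |Xe (w n) s| ≤ B) :
    Tendsto (fun n => ∫ s in Ioc 0 t, approxIntegrand H (w n) s (Xe (w n) s)) atTop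
      (𝓝 ((X t - X₀ + b * (∫ s in Ioc 0 t, X s) - σ * g t) / a)) := by
  have hIoc : ∀ᵐ s ∂volume.restrict (Ioc 0 t), s ∈ Ioc 0 t := ae_restrict_mem measurableSet_Ioc
  have hJ : Tendsto (fun n => ∫ s in Ioc 0 t, Xe (w n) s) atTop (𝓝 (∫ s in Ioc 0 t, X s)) :=
    tendsto_integral_of_dominated_convergence (fun _ => B)
      (fun n => ((hXe _ (hw n) t ht).1.aestronglyMeasurable measurableSet_Icc).mono_measure
        (Measure.restrict_mono Ioc_subset_Icc_self le_rfl))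
      (integrableOn_const measure_Ioc_lt_top.ne)
      (fun n => by
        filter_upwards [hIoc] with s hs using hB n s (Ioc_subset_Icc_self hs))
      (by filter_upwards [hIoc] with s hs using (hX s hs.1.le).comp hwlim)
  have heq : ∀ n, ∫ s in Ioc 0 t, approxIntegrand H (w n) s (Xe (w n) s)
      = (Xe (w n) t - X₀ + b * (∫ s in Ioc 0 t, Xe (w n) s) - σ * g t) / a := by
    intro n
    have h := (hXe _ (hw n) t ht).eq_integral_approxIntegrand ⟨ht.le, le_rfl⟩
    rw [intervalIntegral.integral_of_le ht.le, intervalIntegral.integral_of_le ht.le] at h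
    rw [eq_div_iff ha]
    linarith
  simp_rw [heq]
  exact (((((hX t ht.le).comp hwlim).sub_const X₀).add (hJ.const_mul b)).sub_const _).div_const a

theorem ae_pos_and_integrableOn_of_tendsto
    (hXe : ∀ ε > (0:ℝ), ∀ T > (0:ℝ), approxSol X₀ a b σ H g T ε (Xe ε))
    (hX : ∀ t ≥ (0:ℝ), Tendsto (fun ε => Xe ε t) (𝓝[>] 0) (𝓝 (X t)))
    (ha : 0 ≤ a) (hb : 0 ≤ b) (hH : H ≤ 1 / 2) (hg0 : g 0 = 0) {t L : ℝ} (ht : 0 < t)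
    {w : ℕ → ℝ} (hw : ∀ n, 0 < w n) (hwlim : Tendsto w atTop (𝓝[>] 0))
    (hL : Tendsto (fun n => ∫ s in Ioc 0 t, approxIntegrand H (w n) s (Xe (w n) s)) atTop
      (𝓝 L)) :
    (∀ᵐ s ∂volume.restrict (Ioc 0 t), 0 < X s) ∧
      IntegrableOn (fun s => s ^ (2 * H - 1) / X s) (Ioc 0 t) ∧
      ∫ s in Ioc 0 t, s ^ (2 * H - 1) / X s ≤ L := by
  have hIoc : ∀ᵐ s ∂volume.restrict (Ioc 0 t), s ∈ Ioc 0 t := ae_restrict_mem measurableSet_Ioc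
  set f : ℝ → ℝ≥0∞ := fun s => if 0 < X s then ENNReal.ofReal (s ^ (2 * H - 1) / X s) else ∞
  obtain ⟨hfin, hint, hle⟩ := integrable_toReal_of_tendsto_integral (f := f)
    (fun n => ((continuousOn_approxIntegrand (hw n) (hXe _ (hw n) t ht).1).integrableOn_Icc
      |>.mono_set Ioc_subset_Icc_self))
    (fun n => by
      filter_upwards [hIoc] with s hs using approxIntegrand_nonneg (hw n) hs.1.le)
    (by
      filter_upwards [hIoc] with s hs using tendsto_approxIntegrand hs.1 hwlim
        ((hX s hs.1.le).comp hwlim) fun n => approxSol_le_limit hXe hX ha hb hH hg0 (hw n) hs.1.le)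
    hL
  have hXpos : ∀ᵐ s ∂volume.restrict (Ioc 0 t), 0 < X s :=
    hfin.mono fun s hs => by_contra fun hXs => by simp [f, hXs] at hs
  have heq : (fun s => (f s).toReal) =ᵐ[volume.restrict (Ioc 0 t)]
      fun s => s ^ (2 * H - 1) / X s := by
    filter_upwards [hIoc, hXpos] with s hs hXs
    simp only [f, if_pos hXs]
    exact ENNReal.toReal_ofReal (div_nonneg (Real.rpow_nonneg hs.1.le _) hXs.le)
  exact ⟨hXpos, hint.congr heq, (integral_congr_ae heq).symm.trans_le hle⟩

end limit

theorem singular_integral_finite_positive_general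
    (X₀ a b σ H : ℝ) (hX₀ : 0 < X₀) (ha : 0 < a) (hb : 0 ≤ b)
    (hH0 : 0 < H) (hH : H < 1/2)
    (g : ℝ → ℝ) (hgc : ContinuousOn g (Set.Ici 0)) (hg0 : g 0 = 0)
    (Xe : ℝ → ℝ → ℝ)
    (hXe : ∀ ε > (0:ℝ), ∀ T > (0:ℝ), approxSol X₀ a b σ H g T ε (Xe ε))
    (X : ℝ → ℝ)
    (hX : ∀ t ≥ (0:ℝ),
      Tendsto (fun ε => Xe ε t) (nhdsWithin 0 (Set.Ioi 0)) (nhds (X t)))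
    :
    ∀ t > (0:ℝ),
      IntegrableOn (fun s => s ^ (2 * H - 1) / X s) (Set.Ioc 0 t) ∧
      0 < (∫ s in (0:ℝ)..t, s ^ (2 * H - 1) / X s) ∧
      a * (∫ s in (0:ℝ)..t, s ^ (2 * H - 1) / X s)
        ≤ X t - X₀ + b * (∫ s in (0:ℝ)..t, X s) - σ * g t := by
  intro t ht
  obtain ⟨w, -, hw, hw0⟩ := exists_seq_strictAnti_tendsto' (zero_lt_one' ℝ)
  have hwlim : Tendsto w atTop (𝓝[>] 0) :=
    tendsto_nhdsWithin_iff.2 ⟨hw0, Eventually.of_forall fun n => (hw n).1⟩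
  obtain ⟨B, hB⟩ := exists_abs_approxSol_le hXe hgc hX₀ ha.le hb hH0 hH.le hg0 ht
  have hL := tendsto_setIntegral_approxIntegrand hXe hX ha.ne' ht (fun n => (hw n).1) hwlim
    fun n => hB (w n) ⟨(hw n).1, (hw n).2.le⟩
  obtain ⟨hXpos, hint, hle⟩ := ae_pos_and_integrableOn_of_tendsto hXe hX ha.le hb hH.le hg0 ht
    (fun n => (hw n).1) hwlim hL
  have hpos : 0 < ∫ s in Ioc 0 t, s ^ (2 * H - 1) / X s :=
    integral_pos_of_ae_pos (by simp [ht]) hint <| by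
      filter_upwards [ae_restrict_mem measurableSet_Ioc, hXpos] with s hs hXs
      exact div_pos (Real.rpow_pos_of_pos hs.1 _) hXs
  simp only [intervalIntegral.integral_of_le ht.le]
  exact ⟨hint, hpos, (le_div_iff₀' ha).1 hle⟩

/-- **Corollary 3.3.** For every `t > 0` the Lebesgue integral
`∫₀ᵗ s^{2H-1}/X_s ds` is finite and strictly positive, and
`a ∫₀ᵗ s^{2H-1}/X_s ds ≤ X_t − X₀ + b ∫₀ᵗ X_s ds − σ g(t)`. -/
theorem singular_integral_finite_positive
    (X₀ a b σ H : ℝ) (hX₀ : 0 < X₀) (ha : 0 < a) (hb : 0 ≤ b) (hσ : 0 < σ)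
    (hH0 : 0 < H) (hH : H < 1/2)
    (g : ℝ → ℝ) (hgc : ContinuousOn g (Set.Ici 0)) (hg0 : g 0 = 0)
    (Xe : ℝ → ℝ → ℝ)
    (hXe : ∀ ε > (0:ℝ), ∀ T > (0:ℝ), approxSol X₀ a b σ H g T ε (Xe ε))
    (X : ℝ → ℝ)
    (hX : ∀ t ≥ (0:ℝ),
      Tendsto (fun ε => Xe ε t) (nhdsWithin 0 (Set.Ioi 0)) (nhds (X t)))
    (β : ℝ) (hβ0 : 0 < β) (hβH : β < H)
    (hgH : ∀ T > (0:ℝ), ∃ C > (0:ℝ), ∀ s ∈ Set.Icc (0:ℝ) T, ∀ t ∈ Set.Icc (0:ℝ) T,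
      |g t - g s| ≤ C * |t - s| ^ β)
    :
    ∀ t > (0:ℝ),
      IntegrableOn (fun s => s ^ (2 * H - 1) / X s) (Set.Ioc 0 t) ∧
      0 < (∫ s in (0:ℝ)..t, s ^ (2 * H - 1) / X s) ∧
      a * (∫ s in (0:ℝ)..t, s ^ (2 * H - 1) / X s)
        ≤ X t - X₀ + b * (∫ s in (0:ℝ)..t, X s) - σ * g t :=
  singular_integral_finite_positive_general X₀ a b σ H hX₀ ha hb hH0 hH g hgc hg0 Xe hXe X hX
end

section
/- Fix ε* > 0 and T > 0. Assume that for every ε > 0 there is a continuous solution X^ε of the ε-approximating equation on [0,T], and that the continuous solution of the ε*-approximating equation on [0,T] is unique. Then for every t ∈ [0,T], lim_{ε→ε*} X^ε_t = X^{ε*}_t. -/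
/-! For `ε > 0` the drift `(s + ε)^(2H-1) / (x⁺ + ε)` is Lipschitz in `x`, and jointly in `(x, ε)`
as long as `ε` stays away from `0`. Hence the difference of two solutions `X^ε - X^ε'` satisfies a
linear integral inequality with a forcing term proportional to `|ε - ε'|`, and Grönwall's lemma
gives `|X^ε_t - X^ε'_t| ≤ C |ε - ε'|` locally uniformly in `ε`. -/

open MeasureTheory Filter Set

open scoped Topology

theorem abs_rpow_sub_rpow_le {c m u v : ℝ} (hc : c ≤ 0) (hm : 0 < m) (hu : m ≤ u) (hv : m ≤ v) :
    |u ^ c - v ^ c| ≤ -c * m ^ (c - 1) * |u - v| := by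
  have hderiv : ∀ x ∈ Ici m, HasDerivWithinAt (· ^ c) (c * x ^ (c - 1)) (Ici m) x := fun x hx =>
    (Real.hasDerivAt_rpow_const (Or.inl (hm.trans_le hx).ne')).hasDerivWithinAt
  have hbound : ∀ x ∈ Ici m, ‖c * x ^ (c - 1)‖ ≤ -c * m ^ (c - 1) := by
    intro x hx
    rw [norm_mul, Real.norm_eq_abs, Real.norm_eq_abs, abs_of_nonpos hc,
      abs_of_pos (Real.rpow_pos_of_pos (hm.trans_le hx) _)]
    exact mul_le_mul_of_nonneg_left (Real.rpow_le_rpow_of_nonpos hm hx (by linarith))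
      (by linarith)
  simpa [Real.norm_eq_abs] using
    (convex_Ici m).norm_image_sub_le_of_norm_hasDerivWithin_le hderiv hbound hv hu

theorem norm_le_gronwallBound_of_eq_integral {E : Type*} [NormedAddCommGroup E]
    [NormedSpace ℝ E] [CompleteSpace E] {D h : ℝ → E} {K δ a b : ℝ}
    (hh : ContinuousOn h (Icc a b)) (hD : ∀ u ∈ Icc a b, D u = ∫ s in a..u, h s)
    (hbound : ∀ u ∈ Ico a b, ‖h u‖ ≤ K * ‖D u‖ + δ) :
    ∀ t ∈ Icc a b, ‖D t‖ ≤ gronwallBound 0 K δ (t - a) := by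
  intro t ht
  have hab : a ≤ b := ht.1.trans ht.2
  have hderiv : ∀ u ∈ Ico a b,
      HasDerivWithinAt (fun v => ∫ s in a..v, h s) (h u) (Ici u) u := by
    intro u hu
    have hnhds : Icc u b ∈ 𝓝[>] u := Icc_mem_nhdsGT_of_mem ⟨le_rfl, hu.2⟩
    have hhu : ContinuousOn h (Icc u b) := hh.mono (Icc_subset_Icc_left hu.1)
    exact intervalIntegral.integral_hasDerivWithinAt_right
      ((hh.mono (Icc_subset_Icc_right hu.2.le)).intervalIntegrable_of_Icc hu.1)
      ⟨_, hnhds, hhu.aestronglyMeasurable measurableSet_Icc⟩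
      ((hhu u ⟨le_rfl, hu.2.le⟩).mono_of_mem_nhdsWithin hnhds)
  have hprim : ContinuousOn (fun v => ∫ s in a..v, h s) (Icc a b) := by
    rw [← uIcc_of_le hab]
    exact intervalIntegral.continuousOn_primitive_interval
      ((uIcc_of_le hab).symm ▸ hh.integrableOn_Icc)
  rw [hD t ht]
  refine norm_le_gronwallBound_of_norm_deriv_right_le hprim hderiv (by simp) ?_ t ht
  intro u hu
  rw [← hD u (Ico_subset_Icc_self hu)]
  exact hbound u hu

/-- Written with `if` rather than `x⁺` so that it is definitionally the integrand of `approxSol`. -/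
noncomputable def approxDrift (c ε s x : ℝ) : ℝ :=
  (s + ε) ^ c / ((if 0 < x then x else 0) + ε)

theorem ContinuousOn.approxDrift {X : ℝ → ℝ} {S : Set ℝ} {c ε : ℝ} (hε : 0 < ε)
    (hS : S ⊆ Ici 0) (hX : ContinuousOn X S) :
    ContinuousOn (fun s => approxDrift c ε s (X s)) S := by
  simp only [_root_.approxDrift, ← posPart_eq_ite_lt]
  refine ContinuousOn.div ?_ (by fun_prop) fun s _ =>
    (add_pos_of_nonneg_of_pos (posPart_nonneg _) hε).ne'
  exact (continuousOn_id.add continuousOn_const).rpow_const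
    fun s hs => Or.inl (add_pos_of_nonneg_of_pos (hS hs) hε).ne'

theorem abs_approxDrift_sub_le {c m ε ε' s x y : ℝ} (hc : c ≤ 0) (hm : 0 < m) (hε : m ≤ ε)
    (hε' : m ≤ ε') (hs : 0 ≤ s) :
    |approxDrift c ε s x - approxDrift c ε' s y| ≤
      m ^ (c - 2) * (|x - y| + (1 - c) * |ε - ε'|) := by
  simp only [approxDrift, ← posPart_eq_ite_lt]
  set δ := |ε - ε'|
  set A := (s + ε) ^ c
  set B := (s + ε') ^ c
  set p := x⁺ + ε
  set q := y⁺ + ε'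
  have hp : m ≤ p := hε.trans (le_add_of_nonneg_left (posPart_nonneg x))
  have hq : m ≤ q := hε'.trans (le_add_of_nonneg_left (posPart_nonneg y))
  have hp0 : 0 < p := hm.trans_le hp
  have hq0 : 0 < q := hm.trans_le hq
  have hA : A ≤ m ^ c := Real.rpow_le_rpow_of_nonpos hm (by linarith) hc
  have hA0 : 0 ≤ A := Real.rpow_nonneg (by linarith) c
  have hAB : |A - B| ≤ -c * m ^ (c - 1) * δ := by
    simpa only [add_sub_add_left_eq_sub] using
      abs_rpow_sub_rpow_le (u := s + ε) (v := s + ε') hc hm (by linarith) (by linarith)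
  have hqp : |q - p| ≤ |x - y| + δ := by
    calc |q - p| = |(y⁺ - x⁺) + (ε' - ε)| := by congr 1; simp only [p, q]; ring
      _ ≤ |y - x| + |ε' - ε| :=
        (abs_add_le _ _).trans (add_le_add (abs_max_sub_max_le_abs y x 0) le_rfl)
      _ = |x - y| + δ := by rw [abs_sub_comm y, abs_sub_comm ε']
  have hsplit : A / p - B / q = A * (q - p) / (p * q) + (A - B) / q := by
    field_simp
    ring
  have hpow1 : m ^ (c - 1) = m ^ c / m := by rw [Real.rpow_sub_one hm.ne']
  have hpow2 : m ^ (c - 2) = m ^ c / m ^ 2 := by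
    rw [Real.rpow_sub hm, Real.rpow_two]
  have hpq : m ^ 2 ≤ p * q := by nlinarith
  calc |A / p - B / q| ≤ |A * (q - p) / (p * q)| + |(A - B) / q| := hsplit ▸ abs_add_le _ _
    _ ≤ m ^ c * (|x - y| + δ) / m ^ 2 + -c * m ^ (c - 1) * δ / m := by
      rw [abs_div, abs_div, abs_mul, abs_of_nonneg hA0, abs_of_pos (mul_pos hp0 hq0),
        abs_of_pos hq0]
      gcongr
      exact (abs_nonneg _).trans hAB
    _ = m ^ (c - 2) * (|x - y| + (1 - c) * δ) := by
      rw [hpow1, hpow2]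
      field_simp
      ring

theorem approxSol.abs_sub_le {X₀ a b σ H T ε ε' m : ℝ} {g X Y : ℝ → ℝ} (hH : H ≤ 1 / 2)
    (hm : 0 < m) (hε : m ≤ ε) (hε' : m ≤ ε') (hX : approxSol X₀ a b σ H g T ε X)
    (hY : approxSol X₀ a b σ H g T ε' Y) :
    ∀ t ∈ Icc 0 T, |X t - Y t| ≤ gronwallBound 0 (|a| * m ^ (2 * H - 3) + |b|)
      (|a| * m ^ (2 * H - 3) * (2 - 2 * H) * |ε - ε'|) t := by
  set c := 2 * H - 1
  have hc : c ≤ 0 := by linarith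
  have hfX := hX.1.approxDrift (c := c) (hm.trans_le hε) fun s hs => hs.1
  have hfY := hY.1.approxDrift (c := c) (hm.trans_le hε') fun s hs => hs.1
  set h : ℝ → ℝ := fun s =>
    a * (approxDrift c ε s (X s) - approxDrift c ε' s (Y s)) - b * (X s - Y s)
  have hh : ContinuousOn h (Icc 0 T) :=
    (continuousOn_const.mul (hfX.sub hfY)).sub (continuousOn_const.mul (hX.1.sub hY.1))
  have hD : ∀ u ∈ Icc 0 T, X u - Y u = ∫ s in (0 : ℝ)..u, h s := by
    intro u hu
    have hint {f : ℝ → ℝ} (hf : ContinuousOn f (Icc 0 T)) : IntervalIntegrable f volume 0 u :=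
      (hf.mono (Icc_subset_Icc_right hu.2)).intervalIntegrable_of_Icc hu.1
    have hXu : X u = X₀ + a * (∫ s in (0 : ℝ)..u, approxDrift c ε s (X s))
        - b * (∫ s in (0 : ℝ)..u, X s) + σ * g u := hX.2 u hu
    have hYu : Y u = X₀ + a * (∫ s in (0 : ℝ)..u, approxDrift c ε' s (Y s))
        - b * (∫ s in (0 : ℝ)..u, Y s) + σ * g u := hY.2 u hu
    rw [intervalIntegral.integral_sub (((hint hfX).sub (hint hfY)).const_mul a)
        (((hint hX.1).sub (hint hY.1)).const_mul b),
      intervalIntegral.integral_const_mul, intervalIntegral.integral_const_mul,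
      intervalIntegral.integral_sub (hint hfX) (hint hfY),
      intervalIntegral.integral_sub (hint hX.1) (hint hY.1)]
    linear_combination hXu - hYu
  have hbound : ∀ u ∈ Ico 0 T, ‖h u‖ ≤ (|a| * m ^ (c - 2) + |b|) * ‖X u - Y u‖
      + |a| * m ^ (c - 2) * (1 - c) * |ε - ε'| := by
    intro u hu
    simp only [Real.norm_eq_abs]
    calc |h u| ≤ |a| * |approxDrift c ε u (X u) - approxDrift c ε' u (Y u)|
          + |b| * |X u - Y u| := by
          rw [← abs_mul, ← abs_mul]; exact abs_sub _ _
      _ ≤ |a| * (m ^ (c - 2) * (|X u - Y u| + (1 - c) * |ε - ε'|)) + |b| * |X u - Y u| := by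
          gcongr
          exact abs_approxDrift_sub_le hc hm hε hε' hu.1
      _ = _ := by ring
  have hc2 : c - 2 = 2 * H - 3 := by ring
  have hc1 : 1 - c = 2 - 2 * H := by ring
  rw [hc2, hc1] at hbound
  simpa using norm_le_gronwallBound_of_eq_integral hh hD hbound

theorem approx_continuous_in_epsilon_general
    (X₀ a b σ H : ℝ)
    (hH : H < 1/2)
    (g : ℝ → ℝ)
    (T : ℝ) (εs : ℝ) (hεs : 0 < εs)
    (Xe : ℝ → ℝ → ℝ)
    (hXe : ∀ ε > (0:ℝ), approxSol X₀ a b σ H g T ε (Xe ε)) :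
    ∀ t ∈ Set.Icc (0:ℝ) T,
      Tendsto (fun ε => Xe ε t) (nhdsWithin εs {εs}ᶜ) (nhds (Xe εs t)) := by
  intro t ht
  set m := εs / 2
  have hm : 0 < m := half_pos hεs
  set K := |a| * m ^ (2 * H - 3) + |b|
  set C := |a| * m ^ (2 * H - 3) * (2 - 2 * H)
  have hclose : ∀ᶠ ε in 𝓝[≠] εs,
      dist (Xe ε t) (Xe εs t) ≤ gronwallBound 0 K (C * |ε - εs|) t := by
    filter_upwards [nhdsWithin_le_nhds (Ioi_mem_nhds (half_lt_self hεs))] with ε hε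
    exact (hXe ε (hm.trans hε)).abs_sub_le hH.le hm hε.le (half_lt_self hεs).le
      (hXe εs hεs) t ht
  have hbound_lim : Tendsto (fun ε => gronwallBound 0 K (C * |ε - εs|) t) (𝓝[≠] εs) (𝓝 0) := by
    have hcont : Continuous fun ε => gronwallBound 0 K (C * |ε - εs|) t :=
      (gronwallBound_continuous_ε 0 K t).comp (by fun_prop)
    simpa [gronwallBound_ε0_δ0] using (hcont.tendsto εs).mono_left nhdsWithin_le_nhds
  exact tendsto_iff_dist_tendsto_zero.2
    (squeeze_zero' (Eventually.of_forall fun _ => dist_nonneg) hclose hbound_lim)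

/-- **Theorem 3.5.** For any `ε* > 0`, if the `ε*`-approximating equation has a
unique continuous solution on `[0,T]`, then `lim_{ε→ε*} X^ε_t = X^{ε*}_t` for
all `t ∈ [0,T]`. -/
theorem approx_continuous_in_epsilon
    (X₀ a b σ H : ℝ) (hX₀ : 0 < X₀) (ha : 0 < a) (hb : 0 ≤ b) (hσ : 0 < σ)
    (hH0 : 0 < H) (hH : H < 1/2)
    (g : ℝ → ℝ) (hgc : ContinuousOn g (Set.Ici 0)) (hg0 : g 0 = 0)
    (T : ℝ) (hT : 0 < T) (εs : ℝ) (hεs : 0 < εs)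
    (Xe : ℝ → ℝ → ℝ)
    (hXe : ∀ ε > (0:ℝ), approxSol X₀ a b σ H g T ε (Xe ε))
    (huniq : ∀ Y : ℝ → ℝ, approxSol X₀ a b σ H g T εs Y →
      ∀ t ∈ Set.Icc (0:ℝ) T, Y t = Xe εs t) :
    ∀ t ∈ Set.Icc (0:ℝ) T,
      Tendsto (fun ε => Xe ε t) (nhdsWithin εs {εs}ᶜ) (nhds (Xe εs t)) :=
  approx_continuous_in_epsilon_general X₀ a b σ H hH g T εs hεs Xe hXe
end
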